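/- arXiv:math/0008026 — 2 statements merged into one kernel-verified Lean document; each statement's English description precedes it below -/
import Mathlib

section
/- Let n ≥ 1 and let a, b₁, …, b_{2n+1}, c ∈ ℂ satisfy b_{i+n} = b_i for 1 ≤ i ≤ n and a − c − b_{2n+1} + 1 = 0. Let u be a smooth (infinitely complex-differentiable) solution of the Appell–Lauricella system E_D^{2n+1}(a, b₁,…,b_{2n+1}, c) on an open set U ⊆ ℂ^{2n+1} contained in the complement of the divisor ∏_{j=1}^{2n+1} x_j(1−x_j) ∏_{i<j}(x_i−x_j) = 0. Define v(x₁,…,x_n) := u(x₁,…,x_n, −x₁,…,−x_n, −1) on the open set V = {x ∈ ℂⁿ : (x₁,…,x_n,−x₁,…,−x_n,−1) ∈ U}. Then v satisfies the system 𝓔(a, b₁,…,b_n, c) at every point of V, i.e. D_iD_j v = Σ_{k=1}^n q^k_{ij} D_k v + q^0_{ij} v for all 1 ≤ i, j ≤ n. -/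
/-!
Along `ι x = (x, -x, -1)` the Euler operator `D_i` of `ℂⁿ` becomes `D_i + D_{i+n}`, because the
`(i+n)`-th coordinate of `ι x` is `-x_i`. Hence `D_i D_j v` is the sum of the four `D_α D_β u`
with `α ∈ {i, i+n}`, `β ∈ {j, j+n}`, and substituting `E_D` expresses it through the `D_κ u`.
Summing the coefficients `p^κ_{αβ}` over these four pairs gives `q^k_{ij}` both for `κ = k` and
for `κ = k+n`, gives `0` for the last coordinate, and `p^0` folds to `q^0`: the terms at `x` and
at `-x` combine by `s/(t-s) - s/(t+s) = 2s²/(t²-s²)`. The condition `b_{2n+1} = a - c + 1`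
enters through the diagonal coefficient `q^i_{ii}`.
-/

open scoped BigOperators

noncomputable section

/-- The Euler operator `D_i = x_i ∂/∂x_i` acting on functions of `m` complex variables. -/
def Dop {m : ℕ} (i : Fin m) (u : (Fin m → ℂ) → ℂ) : (Fin m → ℂ) → ℂ :=
  fun x => x i * fderiv ℂ u x (Pi.single i 1)

/-- The coefficients `p^k_{ij}` of the Appell–Lauricella system `E_D^m(a, b, c)`. -/
def pCoeff {m : ℕ} (a : ℂ) (b : Fin m → ℂ) (c : ℂ) (k i j : Fin m) (x : Fin m → ℂ) : ℂ :=
  if i = j then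
    (if k = i then
      -(∑ l ∈ Finset.univ.erase i, b l * x l / (x i - x l))
        + ((a + b i) * x i - c + 1) / (1 - x i)
     else b i * (x i / (1 - x i) - x i / (x k - x i)))
  else if k = i then b j * x j / (x i - x j)
  else if k = j then b i * x i / (x j - x i)
  else 0

/-- The coefficients `p^0_{ij}` of the Appell–Lauricella system `E_D^m(a, b, c)`. -/
def pCoeff0 {m : ℕ} (a : ℂ) (b : Fin m → ℂ) (c : ℂ) (i j : Fin m) (x : Fin m → ℂ) : ℂ :=
  if i = j then a * b i * x i / (1 - x i) else 0

/-- `u` solves the Appell–Lauricella hypergeometric system `E_D^m(a, b, c)`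
at every point of `U`. -/
def SolvesED {m : ℕ} (a : ℂ) (b : Fin m → ℂ) (c : ℂ) (u : (Fin m → ℂ) → ℂ)
    (U : Set (Fin m → ℂ)) : Prop :=
  ∀ x ∈ U, ∀ i j : Fin m,
    Dop i (Dop j u) x =
      (∑ k, pCoeff a b c k i j x * Dop k u x) + pCoeff0 a b c i j x * u x

/-- The coefficients `q^k_{ij}` of the system `𝓔(a, b, c)`. -/
def qCoeff {n : ℕ} (a : ℂ) (b : Fin n → ℂ) (c : ℂ) (k i j : Fin n) (x : Fin n → ℂ) : ℂ :=
  if i = j then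
    (if k = i then
      -(∑ l ∈ Finset.univ.erase i, 2 * b l * x l ^ 2 / (x i ^ 2 - x l ^ 2))
        + ((a + 2 * b i) * x i ^ 2 + a - 2 * c + 2) / (1 - x i ^ 2)
     else 2 * b i * (x i ^ 2 / (1 - x i ^ 2) - x i ^ 2 / (x k ^ 2 - x i ^ 2)))
  else if k = i then 2 * b j * x j ^ 2 / (x i ^ 2 - x j ^ 2)
  else if k = j then 2 * b i * x i ^ 2 / (x j ^ 2 - x i ^ 2)
  else 0

/-- The coefficients `q^0_{ij}` of the system `𝓔(a, b, c)`. -/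
def qCoeff0 {n : ℕ} (a : ℂ) (b : Fin n → ℂ) (c : ℂ) (i j : Fin n) (x : Fin n → ℂ) : ℂ :=
  if i = j then 2 * a * b i * x i ^ 2 / (1 - x i ^ 2) else 0

/-- `v` solves the system `𝓔(a, b, c)` at every point of `V`. -/
def SolvesE {n : ℕ} (a : ℂ) (b : Fin n → ℂ) (c : ℂ) (v : (Fin n → ℂ) → ℂ)
    (V : Set (Fin n → ℂ)) : Prop :=
  ∀ x ∈ V, ∀ i j : Fin n,
    Dop i (Dop j v) x =
      (∑ k, qCoeff a b c k i j x * Dop k v x) + qCoeff0 a b c i j x * v x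

/-- The complement of the divisor `∏_j x_j (1 - x_j) ∏_{i<j} (x_i - x_j) = 0`. -/
def divisorComplement (m : ℕ) : Set (Fin m → ℂ) :=
  {x | (∏ j, x j * (1 - x j)) *
      ∏ p ∈ Finset.univ.filter (fun p : Fin m × Fin m => p.1 < p.2), (x p.1 - x p.2) ≠ 0}

/-- The embedding `(x₁, …, x_n) ↦ (x₁, …, x_n, -x₁, …, -x_n, -1)`. -/
def emb (n : ℕ) (x : Fin n → ℂ) : Fin (2 * n + 1) → ℂ :=
  fun j =>
    if h : (j : ℕ) < n then x ⟨j, h⟩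
    else if h2 : (j : ℕ) < 2 * n then -x ⟨(j : ℕ) - n, by omega⟩
    else -1

section Indices

variable {n : ℕ}

def fstIdx (k : Fin n) : Fin (2 * n + 1) := Fin.castLE (by omega) k

def sndIdx (k : Fin n) : Fin (2 * n + 1) := Fin.castLE (by omega) (k.addNat n)

def lastIdx (n : ℕ) : Fin (2 * n + 1) := Fin.last (2 * n)

@[simp] lemma fstIdx_inj {k l : Fin n} : fstIdx k = fstIdx l ↔ k = l := by
  simp [fstIdx, Fin.ext_iff]

@[simp] lemma sndIdx_inj {k l : Fin n} : sndIdx k = sndIdx l ↔ k = l := by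
  simp [sndIdx, Fin.ext_iff]

@[simp] lemma fstIdx_ne_sndIdx (k l : Fin n) : fstIdx k ≠ sndIdx l :=
  Fin.ne_of_val_ne (by simp only [fstIdx, sndIdx, Fin.val_castLE, Fin.val_addNat]; omega)

@[simp] lemma sndIdx_ne_fstIdx (k l : Fin n) : sndIdx k ≠ fstIdx l :=
  (fstIdx_ne_sndIdx l k).symm

@[simp] lemma fstIdx_ne_lastIdx (k : Fin n) : fstIdx k ≠ lastIdx n :=
  Fin.ne_of_val_ne (by simp only [fstIdx, lastIdx, Fin.val_castLE, Fin.val_last]; omega)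

@[simp] lemma sndIdx_ne_lastIdx (k : Fin n) : sndIdx k ≠ lastIdx n :=
  Fin.ne_of_val_ne <| by
    simp only [sndIdx, lastIdx, Fin.val_castLE, Fin.val_addNat, Fin.val_last]; omega

@[simp] lemma lastIdx_ne_fstIdx (k : Fin n) : lastIdx n ≠ fstIdx k :=
  (fstIdx_ne_lastIdx k).symm

@[simp] lemma lastIdx_ne_sndIdx (k : Fin n) : lastIdx n ≠ sndIdx k :=
  (sndIdx_ne_lastIdx k).symm

lemma fin_two_mul_add_one_cases (j : Fin (2 * n + 1)) :
    (∃ k, j = fstIdx k) ∨ (∃ k, j = sndIdx k) ∨ j = lastIdx n := by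
  by_cases h₁ : (j : ℕ) < n
  · exact .inl ⟨⟨j, h₁⟩, Fin.ext rfl⟩
  by_cases h₂ : (j : ℕ) < 2 * n
  · refine .inr (.inl ⟨⟨j - n, by omega⟩, Fin.ext ?_⟩)
    simp only [sndIdx, Fin.val_castLE, Fin.val_addNat]; omega
  · exact .inr (.inr (Fin.ext (by simp only [lastIdx, Fin.val_last]; omega)))

lemma sum_fin_two_mul_add_one {M : Type*} [AddCommMonoid M] (f : Fin (2 * n + 1) → M) :
    ∑ j, f j = ∑ k, f (fstIdx k) + ∑ k, f (sndIdx k) + f (lastIdx n) := by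
  rw [Fin.sum_univ_castSucc, ← (finCongr (two_mul n)).symm.sum_comp, Fin.sum_univ_add]
  congr 2
  exact Fintype.sum_congr _ _ fun k => congrArg f (Fin.ext (by simp [sndIdx, add_comm]))

@[simp] lemma emb_fstIdx (x : Fin n → ℂ) (k : Fin n) : emb n x (fstIdx k) = x k := by
  simp [emb, fstIdx]

@[simp] lemma emb_sndIdx (x : Fin n → ℂ) (k : Fin n) : emb n x (sndIdx k) = -x k := by
  simp [emb, sndIdx, show (k : ℕ) + n < 2 * n by omega]

@[simp] lemma emb_lastIdx (x : Fin n → ℂ) : emb n x (lastIdx n) = -1 := by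
  simp [emb, lastIdx, show ¬ 2 * n < n by omega]

def foldPair (F : Fin (2 * n + 1) → Fin (2 * n + 1) → ℂ) (i j : Fin n) : ℂ :=
  F (fstIdx i) (fstIdx j) + F (fstIdx i) (sndIdx j) + F (sndIdx i) (fstIdx j)
    + F (sndIdx i) (sndIdx j)

lemma foldPair_sum_mul_add {N : ℕ} (P : Fin N → Fin (2 * n + 1) → Fin (2 * n + 1) → ℂ)
    (P₀ : Fin (2 * n + 1) → Fin (2 * n + 1) → ℂ) (d : Fin N → ℂ) (w : ℂ) (i j : Fin n) :
    foldPair (fun α β => ∑ κ, P κ α β * d κ + P₀ α β * w) i j =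
      ∑ κ, foldPair (P κ) i j * d κ + foldPair P₀ i j * w := by
  simp only [foldPair, add_mul, Finset.sum_add_distrib]
  ring

end Indices

section EulerOperator

variable {m : ℕ}

lemma Filter.EventuallyEq.Dop_eq {f g : (Fin m → ℂ) → ℂ} {y : Fin m → ℂ}
    (h : f =ᶠ[nhds y] g) (k : Fin m) : Dop k f y = Dop k g y := by
  simp only [Dop, h.fderiv_eq]

lemma Dop_add {f g : (Fin m → ℂ) → ℂ} {y : Fin m → ℂ}
    (hf : DifferentiableAt ℂ f y) (hg : DifferentiableAt ℂ g y) (k : Fin m) :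
    Dop k (fun z => f z + g z) y = Dop k f y + Dop k g y := by
  simp only [Dop, fderiv_fun_add hf hg, add_apply, mul_add]

lemma ContDiffOn.Dop {u : (Fin m → ℂ) → ℂ} {U : Set (Fin m → ℂ)} (hU : IsOpen U)
    (hu : ContDiffOn ℂ ⊤ u U) (k : Fin m) : ContDiffOn ℂ ⊤ (Dop k u) U :=
  (contDiff_apply ℂ ℂ k).contDiffOn.mul
    ((hu.fderiv_of_isOpen hU le_top).clm_apply contDiffOn_const)

end EulerOperator

section Pullback

variable {n : ℕ}

def embLinear (n : ℕ) : (Fin n → ℂ) →ₗ[ℂ] (Fin (2 * n + 1) → ℂ) where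
  toFun x := emb n x - emb n 0
  map_add' x y := by
    funext j; simp only [emb, Pi.add_apply, Pi.sub_apply]; split_ifs <;> simp [add_comm]
  map_smul' r x := by
    funext j; simp only [emb, Pi.smul_apply, Pi.sub_apply]; split_ifs <;> simp

lemma embLinear_single (i : Fin n) :
    embLinear n (Pi.single i 1) = Pi.single (fstIdx i) 1 - Pi.single (sndIdx i) 1 := by
  funext j
  rcases fin_two_mul_add_one_cases j with ⟨k, rfl⟩ | ⟨k, rfl⟩ | rfl <;>
    simp [embLinear, Pi.single_apply, eq_comm]

lemma hasFDerivAt_emb (x : Fin n → ℂ) :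
    HasFDerivAt (emb n) (LinearMap.toContinuousLinearMap (embLinear n)) x := by
  have h : emb n = fun x => embLinear n x + emb n 0 := by funext x; simp [embLinear]
  rw [h]
  exact (LinearMap.toContinuousLinearMap (embLinear n)).hasFDerivAt.add_const _

lemma continuous_emb (n : ℕ) : Continuous (emb n) :=
  continuous_iff_continuousAt.mpr fun x => (hasFDerivAt_emb x).continuousAt

lemma Dop_comp_emb {f : (Fin (2 * n + 1) → ℂ) → ℂ} {x : Fin n → ℂ}
    (hf : DifferentiableAt ℂ f (emb n x)) (i : Fin n) :
    Dop i (fun z => f (emb n z)) x = Dop (fstIdx i) f (emb n x) + Dop (sndIdx i) f (emb n x) := by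
  have hcomp : HasFDerivAt (fun z => f (emb n z)) _ x :=
    hf.hasFDerivAt.comp x (hasFDerivAt_emb x)
  simp only [Dop, hcomp.fderiv, ContinuousLinearMap.comp_apply,
    LinearMap.coe_toContinuousLinearMap', embLinear_single, map_sub, emb_fstIdx, emb_sndIdx]
  ring

lemma Dop_Dop_comp_emb {u : (Fin (2 * n + 1) → ℂ) → ℂ} {U : Set (Fin (2 * n + 1) → ℂ)}
    (hU : IsOpen U) (hu : ContDiffOn ℂ ⊤ u U) {x : Fin n → ℂ} (hx : emb n x ∈ U) (i j : Fin n) :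
    Dop i (Dop j (fun z => u (emb n z))) x =
      foldPair (fun α β => Dop α (Dop β u) (emb n x)) i j := by
  have hdiff {f : (Fin (2 * n + 1) → ℂ) → ℂ} (hf : ContDiffOn ℂ ⊤ f U) {y : Fin (2 * n + 1) → ℂ}
      (hy : y ∈ U) : DifferentiableAt ℂ f y :=
    (hf.contDiffAt (hU.mem_nhds hy)).differentiableAt (by simp)
  have hfst := hdiff (hu.Dop hU (fstIdx j)) hx
  have hsnd := hdiff (hu.Dop hU (sndIdx j)) hx
  have hDj : Dop j (fun z => u (emb n z)) =ᶠ[nhds x]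
      fun z => Dop (fstIdx j) u (emb n z) + Dop (sndIdx j) u (emb n z) := by
    filter_upwards [(hU.preimage (continuous_emb n)).mem_nhds hx] with z hz
    exact Dop_comp_emb (hdiff hu hz) j
  rw [hDj.Dop_eq, Dop_comp_emb (f := fun y => Dop (fstIdx j) u y + Dop (sndIdx j) u y)
    (hfst.add hsnd), Dop_add hfst hsnd, Dop_add hfst hsnd, foldPair]
  ring

end Pullback

lemma div_sub_sub_div_add (t s : ℂ) (h : t ^ 2 ≠ s ^ 2) :
    s / (t - s) - s / (t + s) = 2 * s ^ 2 / (t ^ 2 - s ^ 2) := by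
  have h₁ : t - s ≠ 0 := fun h' => h (by linear_combination (t + s) * h')
  have h₂ : t + s ≠ 0 := fun h' => h (by linear_combination (t - s) * h')
  rw [div_sub_div _ _ h₁ h₂, show (t - s) * (t + s) = t ^ 2 - s ^ 2 by ring]
  ring

/-- The part of the folded `p^i_{ii}` outside the sum over `l`, after `b_{2n+1} = a - c + 1`. -/
lemma diag_fold_identity (a b c : ℂ) {t : ℂ} (ht : t ^ 2 ≠ 1) :
    (a - c + 1) / (t + 1) + ((a + b) * t - c + 1) / (1 - t) - b * t / (1 + t) =
      ((a + 2 * b) * t ^ 2 + a - 2 * c + 2) / (1 - t ^ 2) := by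
  have h₁ : 1 - t ≠ 0 := fun h' => ht (by linear_combination -(1 + t) * h')
  have h₂ : 1 + t ≠ 0 := fun h' => ht (by linear_combination -(1 - t) * h')
  have h₃ : 1 - t ^ 2 ≠ 0 := fun h' => ht (by linear_combination -h')
  have h₄ : t + 1 ≠ 0 := by rwa [add_comm]
  field_simp
  ring

section Folding

variable {n : ℕ} (a c : ℂ) (b : Fin (2 * n + 1) → ℂ) (x : Fin n → ℂ)
variable (hb : ∀ k, b (sndIdx k) = b (fstIdx k)) (hlast : b (lastIdx n) = a - c + 1)
variable (hx0 : ∀ k, x k ≠ 0) (hx1 : ∀ k, x k ^ 2 ≠ 1)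
  (hxx : Pairwise fun k l => x k ^ 2 ≠ x l ^ 2)

/- The sums run over all `l`: the terms omitted in `pCoeff` and `qCoeff` (`l = α`, resp. `l = i`)
vanish here by division by zero. -/
include hb in
lemma sum_div_sub_emb {i : Fin n} (hxi : x i ≠ 0) (hxl : ∀ l ≠ i, x i ^ 2 ≠ x l ^ 2)
    {t : ℂ} (ht : t = x i ∨ t = -x i) :
    ∑ l, b l * emb n x l / (t - emb n x l) =
      ∑ l, 2 * b (fstIdx l) * x l ^ 2 / (x i ^ 2 - x l ^ 2)
        - b (fstIdx i) / 2 - b (lastIdx n) / (t + 1) := by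
  have ht_sq : t ^ 2 = x i ^ 2 := by rcases ht with rfl | rfl <;> simp
  rw [sum_fin_two_mul_add_one]
  simp only [emb_fstIdx, emb_sndIdx, emb_lastIdx, hb, mul_neg, ← Finset.sum_add_distrib]
  rw [← Finset.add_sum_erase _ _ (Finset.mem_univ i),
    ← Finset.add_sum_erase _ _ (Finset.mem_univ i)]
  have hpair : ∀ l ∈ Finset.univ.erase i,
      b (fstIdx l) * x l / (t - x l) + -(b (fstIdx l) * x l) / (t - -x l) =
        2 * b (fstIdx l) * x l ^ 2 / (x i ^ 2 - x l ^ 2) := fun l hl => by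
    have h := div_sub_sub_div_add t (x l) (ht_sq ▸ hxl l (Finset.ne_of_mem_erase hl))
    rw [ht_sq] at h
    linear_combination b (fstIdx l) * h
  have hself : b (fstIdx i) * x i / (t - x i) + -(b (fstIdx i) * x i) / (t - -x i) =
      -(b (fstIdx i) / 2) := by
    rcases ht with rfl | rfl <;>
      simp only [sub_self, div_zero, sub_neg_eq_add, zero_add, add_zero] <;> field_simp <;> ring
  rw [Finset.sum_congr rfl hpair, hself]
  simp only [Finset.sum_erase_eq_sub (Finset.mem_univ i), sub_self, div_zero, sub_zero, mul_one,
    sub_neg_eq_add]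
  ring

include hb hlast hx0 hx1 hxx in
lemma foldPair_pCoeff_fstIdx (i j k : Fin n) :
    foldPair (fun α β => pCoeff a b c (fstIdx k) α β (emb n x)) i j =
      qCoeff a (fun l => b (fstIdx l)) c k i j x := by
  rcases eq_or_ne i j with rfl | hij
  · rcases eq_or_ne k i with rfl | hki
    · simp only [foldPair, pCoeff, ↓reduceIte, emb_fstIdx, Finset.mem_univ,
          Finset.sum_erase_eq_sub, sub_self, div_zero, sub_zero, fstIdx_ne_sndIdx, hb, emb_sndIdx,
          mul_neg, sub_neg_eq_add, sndIdx_ne_fstIdx, qCoeff]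
      rw [sum_div_sub_emb b x hb (hx0 k) (fun l hl => hxx hl.symm) (.inl rfl), hlast]
      have half : x k / (x k + x k) = 1 / 2 := by field_simp [hx0 k]; ring
      linear_combination diag_fold_identity a (b (fstIdx k)) c (hx1 k) - b (fstIdx k) * half
    · simp only [foldPair, pCoeff, ↓reduceIte, fstIdx_inj, hki, emb_fstIdx, fstIdx_ne_sndIdx,
          add_zero, sndIdx_ne_fstIdx, hb, emb_sndIdx, sub_neg_eq_add, qCoeff]
      linear_combination b (fstIdx i) *
        (div_sub_sub_div_add 1 (x i) (by simpa [eq_comm] using hx1 i)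
          - div_sub_sub_div_add (x k) (x i) (hxx hki))
  · rcases eq_or_ne k i with rfl | hki
    · simp only [foldPair, pCoeff, fstIdx_inj, hij, ↓reduceIte, emb_fstIdx, fstIdx_ne_sndIdx, hb,
          emb_sndIdx, mul_neg, sub_neg_eq_add, sndIdx_ne_fstIdx, add_zero, sndIdx_inj, qCoeff]
      linear_combination b (fstIdx j) * div_sub_sub_div_add (x k) (x j) (hxx hij)
    rcases eq_or_ne k j with rfl | hkj
    · simp only [foldPair, pCoeff, fstIdx_inj, hij, ↓reduceIte, hki, emb_fstIdx, fstIdx_ne_sndIdx,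
          add_zero, sndIdx_ne_fstIdx, hb, emb_sndIdx, mul_neg, sub_neg_eq_add, sndIdx_inj, qCoeff]
      linear_combination b (fstIdx i) * div_sub_sub_div_add (x k) (x i) (hxx hki)
    · simp [foldPair, pCoeff, qCoeff, hij, hki, hkj]

include hb hlast hx0 hx1 hxx in
lemma foldPair_pCoeff_sndIdx (i j k : Fin n) :
    foldPair (fun α β => pCoeff a b c (sndIdx k) α β (emb n x)) i j =
      qCoeff a (fun l => b (fstIdx l)) c k i j x := by
  rcases eq_or_ne i j with rfl | hij
  · rcases eq_or_ne k i with rfl | hki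
    · simp only [foldPair, pCoeff, ↓reduceIte, sndIdx_ne_fstIdx, emb_fstIdx, emb_sndIdx,
          fstIdx_ne_sndIdx, Finset.mem_univ, Finset.sum_erase_eq_sub, hb, mul_neg, sub_self,
          div_zero, sub_zero, sub_neg_eq_add, qCoeff]
      rw [sum_div_sub_emb b x hb (hx0 k) (fun l hl => hxx hl.symm) (.inr rfl), hlast]
      have half : -x k / (-x k + -x k) = 1 / 2 := by field_simp [hx0 k]; ring
      linear_combination diag_fold_identity a (b (fstIdx k)) c (t := -x k) (by simpa using hx1 k)
        - b (fstIdx k) * half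
    · simp only [foldPair, pCoeff, ↓reduceIte, sndIdx_ne_fstIdx, emb_fstIdx, emb_sndIdx,
          fstIdx_ne_sndIdx, sndIdx_inj, hki, add_zero, hb, sub_neg_eq_add, qCoeff]
      linear_combination b (fstIdx i) *
        (div_sub_sub_div_add 1 (x i) (by simpa [eq_comm] using hx1 i)
          - div_sub_sub_div_add (-x k) (x i) (by simpa using hxx hki))
  · rcases eq_or_ne k i with rfl | hki
    · simp only [foldPair, pCoeff, fstIdx_inj, hij, ↓reduceIte, sndIdx_ne_fstIdx,
          fstIdx_ne_sndIdx, sndIdx_inj, add_zero, emb_fstIdx, emb_sndIdx, zero_add, hb, mul_neg,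
          sub_neg_eq_add, qCoeff]
      linear_combination b (fstIdx j) * div_sub_sub_div_add (-x k) (x j) (by simpa using hxx hij)
    rcases eq_or_ne k j with rfl | hkj
    · simp only [foldPair, pCoeff, fstIdx_inj, hij, ↓reduceIte, sndIdx_ne_fstIdx,
          fstIdx_ne_sndIdx, emb_fstIdx, emb_sndIdx, zero_add, sndIdx_inj, hki, add_zero, hb,
          mul_neg, sub_neg_eq_add, qCoeff]
      linear_combination b (fstIdx i) * div_sub_sub_div_add (-x k) (x i) (by simpa using hxx hki)
    · simp [foldPair, pCoeff, qCoeff, hij, hki, hkj]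

include hb hx1 in
lemma foldPair_pCoeff_lastIdx (i j : Fin n) :
    foldPair (fun α β => pCoeff a b c (lastIdx n) α β (emb n x)) i j = 0 := by
  rcases eq_or_ne i j with rfl | hij
  · have h : (1 : ℂ) ^ 2 ≠ x i ^ 2 := by simpa [eq_comm] using hx1 i
    simp only [foldPair, pCoeff, ↓reduceIte, lastIdx_ne_fstIdx, emb_fstIdx, emb_lastIdx,
        fstIdx_ne_sndIdx, lastIdx_ne_sndIdx, add_zero, sndIdx_ne_fstIdx, hb, emb_sndIdx,
        sub_neg_eq_add]
    linear_combination b (fstIdx i) * (div_sub_sub_div_add 1 (x i) h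
      - div_sub_sub_div_add (-1) (x i) (by simpa using h))
  · simp [foldPair, pCoeff, hij]

include hb hx1 in
lemma foldPair_pCoeff0 (i j : Fin n) :
    foldPair (fun α β => pCoeff0 a b c α β (emb n x)) i j =
      qCoeff0 a (fun l => b (fstIdx l)) c i j x := by
  rcases eq_or_ne i j with rfl | hij
  · simp only [foldPair, pCoeff0, ↓reduceIte, emb_fstIdx, fstIdx_ne_sndIdx, add_zero,
        sndIdx_ne_fstIdx, hb, emb_sndIdx, mul_neg, sub_neg_eq_add, qCoeff0]
    linear_combination a * b (fstIdx i) *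
      div_sub_sub_div_add 1 (x i) (by simpa [eq_comm] using hx1 i)
  · simp [foldPair, pCoeff0, qCoeff0, hij]

end Folding

lemma mem_divisorComplement_iff {m : ℕ} {y : Fin m → ℂ} :
    y ∈ divisorComplement m ↔ (∀ j, y j ≠ 0 ∧ y j ≠ 1) ∧ Function.Injective y := by
  simp only [divisorComplement, Set.mem_ofPred_eq, mul_ne_zero_iff, Finset.prod_ne_zero_iff,
    Finset.mem_univ, Finset.mem_filter, true_and, forall_const, sub_ne_zero,
    ne_comm (a := (1 : ℂ))]
  refine and_congr_right fun _ => ⟨fun h j k hjk => ?_, fun h p hp => h.ne hp.ne⟩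
  by_contra hne
  rcases lt_or_gt_of_ne hne with hlt | hlt
  · exact h (j, k) hlt hjk
  · exact h (k, j) hlt hjk.symm

lemma nondegenerate_of_emb_mem_divisorComplement {n : ℕ} {x : Fin n → ℂ}
    (h : emb n x ∈ divisorComplement (2 * n + 1)) :
    (∀ k, x k ≠ 0) ∧ (∀ k, x k ^ 2 ≠ 1) ∧ Pairwise fun k l => x k ^ 2 ≠ x l ^ 2 := by
  obtain ⟨h01, hinj⟩ := mem_divisorComplement_iff.mp h
  refine ⟨fun k => by simpa using (h01 (fstIdx k)).1, fun k hk => ?_, fun k l hkl hsq => ?_⟩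
  · rcases sq_eq_one_iff.mp hk with hk | hk
    · exact (h01 (fstIdx k)).2 (by simpa using hk)
    · exact (h01 (sndIdx k)).2 (by simp [hk])
  · rcases sq_eq_sq_iff_eq_or_eq_neg.mp hsq with hsq | hsq
    · exact hkl (fstIdx_inj.mp (hinj (by simpa using hsq)))
    · exact fstIdx_ne_sndIdx k l (hinj (by simpa using hsq))

/-- if `b_{i+n} = b_i` for `1 ≤ i ≤ n` and `a - c - b_{2n+1} + 1 = 0`, then the
pull-back `v = u ∘ ι` of a smooth solution `u` of `E_D^{2n+1}(a, b, c)` under the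
embedding `ι : (x₁, …, x_n) ↦ (x₁, …, x_n, -x₁, …, -x_n, -1)` solves `𝓔(a, b₁, …, b_n, c)`. -/
theorem statement0 (n : ℕ) (a c : ℂ) (b : Fin (2 * n + 1) → ℂ)
    (hb : ∀ i : Fin n, b ⟨(i : ℕ) + n, by omega⟩ = b ⟨(i : ℕ), by omega⟩)
    (hlast : a - c - b ⟨2 * n, by omega⟩ + 1 = 0)
    (U : Set (Fin (2 * n + 1) → ℂ)) (hU : IsOpen U)
    (hUdiv : U ⊆ divisorComplement (2 * n + 1))
    (u : (Fin (2 * n + 1) → ℂ) → ℂ) (hu : ContDiffOn ℂ ⊤ u U)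
    (hsol : SolvesED a b c u U) :
    SolvesE a (fun i : Fin n => b ⟨(i : ℕ), by omega⟩) c (fun x => u (emb n x))
      {x : Fin n → ℂ | emb n x ∈ U} := by
  change SolvesE a (fun l => b (fstIdx l)) c _ _
  intro x hx i j
  obtain ⟨hx0, hx1, hxx⟩ := nondegenerate_of_emb_mem_divisorComplement (hUdiv hx)
  have hb' : ∀ k, b (sndIdx k) = b (fstIdx k) := hb
  have hlast' : b (lastIdx n) = a - c + 1 := by
    have h : a - c - b (lastIdx n) + 1 = 0 := hlast
    linear_combination -h
  have hDv (k : Fin n) : Dop k (fun z => u (emb n z)) x =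
      Dop (fstIdx k) u (emb n x) + Dop (sndIdx k) u (emb n x) :=
    Dop_comp_emb ((hu.contDiffAt (hU.mem_nhds hx)).differentiableAt (by simp)) k
  simp only [Dop_Dop_comp_emb hU hu hx, hsol _ hx]
  rw [foldPair_sum_mul_add, sum_fin_two_mul_add_one,
    foldPair_pCoeff_lastIdx a c b x hb' hx1, foldPair_pCoeff0 a c b x hb' hx1]
  simp only [foldPair_pCoeff_fstIdx a c b x hb' hlast' hx0 hx1 hxx,
    foldPair_pCoeff_sndIdx a c b x hb' hlast' hx0 hx1 hxx, hDv, mul_add, Finset.sum_add_distrib]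
  ring

end
end

section
/- Let f : (x₁,x₂,x₃,x₄) ↦ (z₁,z₂,z₃,z₄) be given by z₁ = (x₃+x₁)(x₂−1)/((x₃−1)(x₂+x₁)), z₂ = (x₄+x₁)(x₂−1)/((x₄−1)(x₂+x₁)), z₃ = (x₃+1)(x₂−x₁)/((x₃−x₁)(x₂+1)), z₄ = (x₄+1)(x₂−x₁)/((x₄−x₁)(x₂+1)). Then for all x₁, x₂, x₃, x₄ ∈ ℂ with x_i ≠ 0 for all i and (x₃−1)(x₂+x₁)(x₄−1)(x₃−x₁)(x₂+1)(x₄−x₁) ≠ 0, one has f(1/x₁, 1/x₂, 1/x₃, 1/x₄) = f(x₁, x₂, x₃, x₄). -/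
noncomputable section

lemma auxSub (a b : ℂ) (ha : a ≠ 0) (hb : b ≠ 0) : 1 / b - 1 / a = -(b - a) / (a * b) := by
  rw [div_sub_div _ _ hb ha, div_eq_div_iff (mul_ne_zero hb ha) (mul_ne_zero ha hb)]
  ring

lemma auxSub1 (a : ℂ) (ha : a ≠ 0) : 1 / a - 1 = -(a - 1) / a := by
  rw [sub_eq_iff_eq_add, div_add' _ _ _ ha, div_eq_div_iff ha ha]
  ring

lemma auxAdd (a b : ℂ) (ha : a ≠ 0) (hb : b ≠ 0) : 1 / b + 1 / a = (b + a) / (a * b) := by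
  rw [div_add_div _ _ hb ha, div_eq_div_iff (mul_ne_zero hb ha) (mul_ne_zero ha hb)]
  ring

lemma auxAdd1 (a : ℂ) (ha : a ≠ 0) : 1 / a + 1 = (a + 1) / a := by
  rw [div_add' _ _ _ ha, div_eq_div_iff ha ha]
  ring

lemma auxDiv (a b k : ℂ) (hk : k ≠ 0) : (a / k) / (b / k) = a / b := by
  rw [div_div_div_comm, div_self hk, div_one]

/-- The map `f : (x₁,x₂,x₃,x₄) ↦ (z₁,z₂,z₃,z₄)` expressing the double covering
`X(2,7) → X(3,6)` in coordinates. -/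
def fmap (x₁ x₂ x₃ x₄ : ℂ) : ℂ × ℂ × ℂ × ℂ :=
  ((x₃ + x₁) * (x₂ - 1) / ((x₃ - 1) * (x₂ + x₁)),
   (x₄ + x₁) * (x₂ - 1) / ((x₄ - 1) * (x₂ + x₁)),
   (x₃ + 1) * (x₂ - x₁) / ((x₃ - x₁) * (x₂ + 1)),
   (x₄ + 1) * (x₂ - x₁) / ((x₄ - x₁) * (x₂ + 1)))

/-- the map `f` is invariant under the involution `# : xᵢ ↦ 1/xᵢ`. -/
theorem statement12 (x₁ x₂ x₃ x₄ : ℂ)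
    (h₁ : x₁ ≠ 0) (h₂ : x₂ ≠ 0) (h₃ : x₃ ≠ 0) (h₄ : x₄ ≠ 0)
    (h : (x₃ - 1) * (x₂ + x₁) * (x₄ - 1) * (x₃ - x₁) * (x₂ + 1) * (x₄ - x₁) ≠ 0) :
    fmap (1 / x₁) (1 / x₂) (1 / x₃) (1 / x₄) = fmap x₁ x₂ x₃ x₄ := by
  simp only [fmap, Prod.mk.injEq,
    auxSub x₁ x₃ h₁ h₃, auxSub x₁ x₄ h₁ h₄, auxSub x₁ x₂ h₁ h₂,
    auxSub1 x₂ h₂, auxSub1 x₃ h₃, auxSub1 x₄ h₄,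
    auxAdd x₁ x₃ h₁ h₃, auxAdd x₁ x₄ h₁ h₄, auxAdd x₁ x₂ h₁ h₂,
    auxAdd1 x₂ h₂, auxAdd1 x₃ h₃, auxAdd1 x₄ h₄]
  have k₃ : x₁ * x₃ * x₂ ≠ 0 := mul_ne_zero (mul_ne_zero h₁ h₃) h₂
  have k₄ : x₁ * x₄ * x₂ ≠ 0 := mul_ne_zero (mul_ne_zero h₁ h₄) h₂
  refine ⟨?_, ?_, ?_, ?_⟩
  · rw [show (x₃ + x₁) / (x₁ * x₃) * (-(x₂ - 1) / x₂) =
        (-((x₃ + x₁) * (x₂ - 1))) / (x₁ * x₃ * x₂) by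
      rw [div_mul_div_comm]; congr 1; ring,
      show -(x₃ - 1) / x₃ * ((x₂ + x₁) / (x₁ * x₂)) =
        (-((x₃ - 1) * (x₂ + x₁))) / (x₁ * x₃ * x₂) by
      rw [div_mul_div_comm]; congr 1; ring; ring,
      auxDiv _ _ _ k₃, neg_div_neg_eq]
  · rw [show (x₄ + x₁) / (x₁ * x₄) * (-(x₂ - 1) / x₂) =
        (-((x₄ + x₁) * (x₂ - 1))) / (x₁ * x₄ * x₂) by
      rw [div_mul_div_comm]; congr 1; ring,
      show -(x₄ - 1) / x₄ * ((x₂ + x₁) / (x₁ * x₂)) =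
        (-((x₄ - 1) * (x₂ + x₁))) / (x₁ * x₄ * x₂) by
      rw [div_mul_div_comm]; congr 1; ring; ring,
      auxDiv _ _ _ k₄, neg_div_neg_eq]
  · rw [show (x₃ + 1) / x₃ * (-(x₂ - x₁) / (x₁ * x₂)) =
        (-((x₃ + 1) * (x₂ - x₁))) / (x₁ * x₃ * x₂) by
      rw [div_mul_div_comm]; congr 1; ring; ring,
      show -(x₃ - x₁) / (x₁ * x₃) * ((x₂ + 1) / x₂) =
        (-((x₃ - x₁) * (x₂ + 1))) / (x₁ * x₃ * x₂) by
      rw [div_mul_div_comm]; congr 1; ring,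
      auxDiv _ _ _ k₃, neg_div_neg_eq]
  · rw [show (x₄ + 1) / x₄ * (-(x₂ - x₁) / (x₁ * x₂)) =
        (-((x₄ + 1) * (x₂ - x₁))) / (x₁ * x₄ * x₂) by
      rw [div_mul_div_comm]; congr 1; ring; ring,
      show -(x₄ - x₁) / (x₁ * x₄) * ((x₂ + 1) / x₂) =
        (-((x₄ - x₁) * (x₂ + 1))) / (x₁ * x₄ * x₂) by
      rw [div_mul_div_comm]; congr 1; ring,
      auxDiv _ _ _ k₄, neg_div_neg_eq]

end
end
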